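/- For α = 0 and m ≥ 1, and a singleton J = {ℓ}, the module V_n^0(−m,{ℓ}) is a simple U(gl(n))-module, generated by x_ℓ^{−m}: every nonzero submodule equals V_n^0(−m,{ℓ}). -/
import Mathlib


open Finsupp

/-- The space of Laurent polynomials `L_n = ℂ[x₁^{±1},...,xₙ^{±1}]`,
realized as finitely supported functions from exponent vectors to ℂ.
The monomial `x^k` is `Finsupp.single k 1`. -/
abbrev Lmon (n : ℕ) : Type := (Fin n → ℤ) →₀ ℂ

/-- The α-twisted action of the matrix unit `E_{ab}` on `L_n`:
`E_{ab} · x^k = (k_b + α_b) x^{k + e_a - e_b}`. -/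
noncomputable def Eab {n : ℕ} (α : Fin n → ℂ) (a b : Fin n) :
    Lmon n →ₗ[ℂ] Lmon n :=
  Finsupp.lsum ℂ (fun k => ((k b : ℂ) + α b) •
    Finsupp.lsingle (fun i => k i + (if i = a then 1 else 0) - (if i = b then 1 else 0)))

open scoped Classical in
/-- `V_n^α(m, J)`: the span of monomials `x^k` of total degree `m` such that
`{ℓ ∈ I_α : k_ℓ < 0} ⊆ J`, where `I_α = {ℓ : α_ℓ = 0}`. -/
noncomputable def Vmod {n : ℕ} (α : Fin n → ℂ) (m : ℤ) (J : Finset (Fin n)) :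
    Submodule ℂ (Lmon n) :=
  Submodule.span ℂ {f | ∃ k : Fin n → ℤ, f = Finsupp.single k (1 : ℂ) ∧
    (∑ i, k i) = m ∧ ∀ ℓ, α ℓ = 0 → k ℓ < 0 → ℓ ∈ J}

open scoped Classical in
/-- `L_n^α(m, j)`: the span of monomials `x^k` of total degree `m` with
`|{ℓ ∈ I_α : k_ℓ < 0}| ≤ j`  (the index `j` is an integer so that `j = -1`
gives the zero module). -/
noncomputable def LmodJ {n : ℕ} (α : Fin n → ℂ) (m j : ℤ) : Submodule ℂ (Lmon n) :=
  Submodule.span ℂ {f | ∃ k : Fin n → ℤ, f = Finsupp.single k (1 : ℂ) ∧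
    (∑ i, k i) = m ∧
    ((Finset.univ.filter (fun ℓ => α ℓ = 0 ∧ k ℓ < 0)).card : ℤ) ≤ j}

/-- A subspace of `L_n` is a `𝔤𝔩(n)`-submodule (equivalently a `U(𝔤𝔩(n))`-submodule)
iff it is invariant under all the operators `E_{ab}`. -/
def glInv {n : ℕ} (α : Fin n → ℂ) (p : Submodule ℂ (Lmon n)) : Prop :=
  ∀ a b : Fin n, ∀ f ∈ p, Eab α a b f ∈ p

/-- The `U(𝔤𝔩(n))`-submodule of `L_n^α` generated by `f`: the smallest subspace
containing `f` that is invariant under all `E_{ab}`. -/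
noncomputable def genMod {n : ℕ} (α : Fin n → ℂ) (f : Lmon n) : Submodule ℂ (Lmon n) :=
  sInf {p | f ∈ p ∧ glInv α p}

section Aux
variable {n : ℕ}

lemma Eab_single (α : Fin n → ℂ) (a b : Fin n) (k : Fin n → ℤ) (c : ℂ) :
    Eab α a b (Finsupp.single k c) =
      ((k b : ℂ) + α b) • Finsupp.single
        (fun i => k i + (if i = a then 1 else 0) - (if i = b then 1 else 0)) c := by
  rw [Eab, Finsupp.lsum_single]
  simp

lemma Eaa_apply (a : Fin n) (f : Lmon n) (k' : Fin n → ℤ) :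
    (Eab (0 : Fin n → ℂ) a a f) k' = (k' a : ℂ) * f k' := by
  classical
  rw [Eab, Finsupp.lsum_apply, Finsupp.sum_apply, Finsupp.sum]
  have h : ∀ k ∈ f.support,
      ((((k a : ℂ) + (0 : Fin n → ℂ) a) • Finsupp.lsingle (R := ℂ)
        (fun i => k i + (if i = a then 1 else 0) - (if i = a then 1 else 0))) (f k)) k'
      = if k = k' then (k a : ℂ) * f k else 0 := by
    intro k _
    have hk : (fun i => k i + (if i = a then 1 else 0) - (if i = a then 1 else 0)) = k := by
      funext i; ring
    rw [hk]
    by_cases hkk : k = k'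
    · subst hkk; simp
    · simp [Finsupp.single_apply, hkk]
  rw [Finset.sum_congr rfl h, Finset.sum_ite_eq' f.support k' (fun k => (k a : ℂ) * f k)]
  by_cases hk' : k' ∈ f.support
  · simp [hk']
  · simp [hk', Finsupp.notMem_support_iff.mp hk']

lemma isolate (p : Submodule ℂ (Lmon n)) (hp : glInv 0 p) :
    ∀ (N : ℕ) (f : Lmon n), f ∈ p → f.support.card ≤ N →
      ∀ k ∈ f.support, Finsupp.single k (f k) ∈ p := by
  intro N
  induction N with
  | zero =>
    intro f _ hc k hk
    rw [Nat.le_zero, Finset.card_eq_zero] at hc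
    rw [hc] at hk
    exact absurd hk (Finset.notMem_empty k)
  | succ N ih =>
    intro f hf hc k hk
    by_cases h1 : f.support.card ≤ 1
    · have hs : f.support ⊆ {k} := by
        intro k2 hk2
        have := Finset.card_le_one.mp h1 k2 hk2 k hk
        simp [this]
      rw [← Finsupp.support_subset_singleton.mp hs]
      exact hf
    · push_neg at h1
      obtain ⟨k2, hk2, hne⟩ := Finset.exists_mem_ne h1 k
      obtain ⟨a, ha⟩ : ∃ a, k2 a ≠ k a := by
        by_contra h; push_neg at h; exact hne (funext h)
      set g : Lmon n := Eab 0 a a f - (k2 a : ℂ) • f with hg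
      have hgp : g ∈ p := sub_mem (hp a a f hf) (Submodule.smul_mem _ _ hf)
      have hgv : ∀ k', g k' = ((k' a : ℂ) - k2 a) * f k' := by
        intro k'
        rw [hg, Finsupp.sub_apply, Finsupp.smul_apply, Eaa_apply, smul_eq_mul, sub_mul]
      have hsub : g.support ⊆ f.support.erase k2 := by
        intro k' hk'
        rw [Finsupp.mem_support_iff, hgv] at hk'
        refine Finset.mem_erase.mpr ⟨?_, Finsupp.mem_support_iff.mpr fun h0 => hk' (by rw [h0, mul_zero])⟩
        rintro rfl; simp at hk'
      have hcard : g.support.card ≤ N := by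
        have h2 := Finset.card_le_card hsub
        rw [Finset.card_erase_of_mem hk2] at h2
        omega
      have hc0 : ((k a : ℂ) - k2 a) ≠ 0 := by
        rw [sub_ne_zero]
        intro h
        exact ha (by exact_mod_cast h.symm)
      have hkg : k ∈ g.support := by
        rw [Finsupp.mem_support_iff, hgv]
        exact mul_ne_zero hc0 (Finsupp.mem_support_iff.mp hk)
      have hmem := ih g hgp hcard k hkg
      have := Submodule.smul_mem p (((k a : ℂ) - k2 a)⁻¹) hmem
      rwa [hgv, Finsupp.smul_single, smul_eq_mul, inv_mul_cancel_left₀ hc0] at this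

variable {n : ℕ}

def inS (m : ℤ) (ℓ : Fin n) (k : Fin n → ℤ) : Prop :=
  (∑ i, k i) = -m ∧ ∀ i, k i < 0 → i = ℓ

lemma single_mem_V {m : ℤ} {ℓ : Fin n} {k : Fin n → ℤ} (h : inS m ℓ k) :
    Finsupp.single k (1 : ℂ) ∈ Vmod 0 (-m) {ℓ} :=
  Submodule.subset_span ⟨k, rfl, h.1, fun i _ hi => Finset.mem_singleton.mpr (h.2 i hi)⟩

lemma supp_V {m : ℤ} {ℓ : Fin n} {f : Lmon n} (hf : f ∈ Vmod 0 (-m) {ℓ}) :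
    ∀ k ∈ f.support, inS m ℓ k := by
  have hle : Vmod (0 : Fin n → ℂ) (-m) {ℓ} ≤ Finsupp.supported ℂ ℂ {k | inS m ℓ k} := by
    rw [Vmod, Submodule.span_le]
    rintro g ⟨k, rfl, h1, h2⟩
    rw [SetLike.mem_coe, Finsupp.mem_supported]
    intro k' hk'
    have hk'' : k' ∈ (Finsupp.single k (1 : ℂ)).support := hk'
    have := Finsupp.support_single_subset hk''
    rw [Finset.mem_singleton] at this
    subst this
    exact ⟨h1, fun i hi => Finset.mem_singleton.mp (h2 i rfl hi)⟩
  intro k hk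
  exact (Finsupp.mem_supported ℂ f).mp (hle hf) hk

lemma V_inv (m : ℤ) (ℓ : Fin n) : glInv 0 (Vmod 0 (-m) {ℓ}) := by
  intro a b f hf
  have hmap : Submodule.map (Eab (0 : Fin n → ℂ) a b) (Vmod 0 (-m) {ℓ}) ≤ Vmod 0 (-m) {ℓ} := by
    rw [Vmod, Submodule.map_span_le]
    rintro g ⟨k, rfl, h1, h2⟩
    rw [Eab_single]
    by_cases hb : k b = 0
    · simp [hb]
    · have h2' : ∀ i, k i < 0 → i = ℓ := fun i hi => Finset.mem_singleton.mp (h2 i rfl hi)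
      refine Submodule.smul_mem _ _ (single_mem_V ⟨?_, ?_⟩)
      · rw [Finset.sum_sub_distrib, Finset.sum_add_distrib]
        rw [Finset.sum_ite_eq' Finset.univ a (fun _ => (1 : ℤ)),
            Finset.sum_ite_eq' Finset.univ b (fun _ => (1 : ℤ))]
        simp [h1]
      · intro i hi
        by_contra hne
        have hpos : ¬ (k i < 0) := fun hlt => hne (h2' i hlt)
        by_cases hia : i = a <;> by_cases hib : i = b
        · subst hia; subst hib; simp at hi; omega
        · subst hia; simp [hib] at hi; omega
        · subst hib; simp [hia] at hi; omega
        · simp [hia, hib] at hi; omega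
  exact hmap ⟨f, hf, rfl⟩


lemma sum_erase_nonneg {m : ℤ} {ℓ : Fin n} {k : Fin n → ℤ} (h : inS m ℓ k) :
    ∀ i ∈ Finset.univ.erase ℓ, 0 ≤ k i := by
  intro i hi
  have hne : i ≠ ℓ := (Finset.mem_erase.mp hi).1
  by_contra hlt
  exact hne (h.2 i (by omega))

lemma kl_eq {m : ℤ} {ℓ : Fin n} {k : Fin n → ℤ} (h : inS m ℓ k) :
    k ℓ + ∑ i ∈ Finset.univ.erase ℓ, k i = -m := by
  rw [Finset.add_sum_erase Finset.univ k (Finset.mem_univ ℓ)]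
  exact h.1

lemma eq_base {m : ℤ} {ℓ : Fin n} {k : Fin n → ℤ} (h : inS m ℓ k)
    (hz : ∀ i ∈ Finset.univ.erase ℓ, k i = 0) :
    k = fun i => if i = ℓ then -m else 0 := by
  have hs : ∑ i ∈ Finset.univ.erase ℓ, k i = 0 := Finset.sum_eq_zero hz
  funext i
  by_cases hi : i = ℓ
  · subst hi
    have h2 := kl_eq h
    rw [hs] at h2
    rw [if_pos rfl]
    omega
  · simp [hi, hz i (Finset.mem_erase.mpr ⟨hi, Finset.mem_univ i⟩)]

lemma lower {m : ℤ} {ℓ : Fin n} (p : Submodule ℂ (Lmon n)) (hp : glInv 0 p) :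
    ∀ (N : ℕ) (k : Fin n → ℤ), inS m ℓ k → (∑ i ∈ Finset.univ.erase ℓ, k i) ≤ N →
      Finsupp.single k (1 : ℂ) ∈ p →
      Finsupp.single (fun i => if i = ℓ then -m else 0) (1 : ℂ) ∈ p := by
  intro N
  induction N with
  | zero =>
    intro k hk hN hmem
    have hz : ∀ i ∈ Finset.univ.erase ℓ, k i = 0 := by
      intro i hi
      have h1 := sum_erase_nonneg hk i hi
      have h2 := Finset.single_le_sum (sum_erase_nonneg hk) hi
      omega
    rwa [eq_base hk hz] at hmem
  | succ N ih =>
    intro k hk hN hmem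
    by_cases hz : ∀ i ∈ Finset.univ.erase ℓ, k i = 0
    · rwa [eq_base hk hz] at hmem
    · push_neg at hz
      obtain ⟨a, ha, hka⟩ := hz
      have haℓ : a ≠ ℓ := (Finset.mem_erase.mp ha).1
      have hka0 : 0 < k a := lt_of_le_of_ne (sum_erase_nonneg hk a ha) (Ne.symm hka)
      set k' : Fin n → ℤ :=
        fun i => k i + (if i = ℓ then 1 else 0) - (if i = a then 1 else 0) with hk'
      have hE := hp ℓ a _ hmem
      rw [Eab_single] at hE
      simp only [Pi.zero_apply, add_zero] at hE
      have hmem' : Finsupp.single k' (1 : ℂ) ∈ p := by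
        have hc : ((k a : ℂ)) ≠ 0 := Int.cast_ne_zero.mpr hka
        have := Submodule.smul_mem p ((k a : ℂ))⁻¹ hE
        rwa [smul_smul, inv_mul_cancel₀ hc, one_smul] at this
      have hk'S : inS m ℓ k' := by
        constructor
        · rw [hk']
          rw [Finset.sum_sub_distrib, Finset.sum_add_distrib,
              Finset.sum_ite_eq' Finset.univ ℓ (fun _ => (1 : ℤ)),
              Finset.sum_ite_eq' Finset.univ a (fun _ => (1 : ℤ))]
          simp [hk.1]
        · intro i hi
          by_contra hne
          have hpos : ¬ (k i < 0) := fun hlt => hne (hk.2 i hlt)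
          rw [hk'] at hi
          by_cases hia : i = a
          · subst hia; simp [hne] at hi; omega
          · simp [hne, hia] at hi; omega
      have hsum' : (∑ i ∈ Finset.univ.erase ℓ, k' i) ≤ N := by
        have : (∑ i ∈ Finset.univ.erase ℓ, k' i)
            = (∑ i ∈ Finset.univ.erase ℓ, k i) - 1 := by
          rw [hk']
          rw [Finset.sum_sub_distrib, Finset.sum_add_distrib]
          have h1 : (∑ i ∈ Finset.univ.erase ℓ, if i = ℓ then (1:ℤ) else 0) = 0 := by
            apply Finset.sum_eq_zero
            intro i hi
            simp [(Finset.mem_erase.mp hi).1]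
          have h2 : (∑ i ∈ Finset.univ.erase ℓ, if i = a then (1:ℤ) else 0) = 1 := by
            rw [Finset.sum_ite_eq' (Finset.univ.erase ℓ) a (fun _ => (1 : ℤ))]
            simp [ha]
          rw [h1, h2]
          ring
        omega
      exact ih k' hk'S hsum' hmem'

lemma raise {m : ℤ} (hm : 1 ≤ m) {ℓ : Fin n} (p : Submodule ℂ (Lmon n)) (hp : glInv 0 p)
    (h0 : Finsupp.single (fun i => if i = ℓ then -m else 0) (1 : ℂ) ∈ p) :
    ∀ (N : ℕ) (k : Fin n → ℤ), inS m ℓ k → (∑ i ∈ Finset.univ.erase ℓ, k i) ≤ N →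
      Finsupp.single k (1 : ℂ) ∈ p := by
  intro N
  induction N with
  | zero =>
    intro k hk hN
    have hz : ∀ i ∈ Finset.univ.erase ℓ, k i = 0 := by
      intro i hi
      have h1 := sum_erase_nonneg hk i hi
      have h2 := Finset.single_le_sum (sum_erase_nonneg hk) hi
      omega
    rw [eq_base hk hz]
    exact h0
  | succ N ih =>
    intro k hk hN
    by_cases hz : ∀ i ∈ Finset.univ.erase ℓ, k i = 0
    · rw [eq_base hk hz]; exact h0
    · push_neg at hz
      obtain ⟨a, ha, hka⟩ := hz
      have haℓ : a ≠ ℓ := (Finset.mem_erase.mp ha).1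
      have hka0 : 0 < k a := lt_of_le_of_ne (sum_erase_nonneg hk a ha) (Ne.symm hka)
      set k'' : Fin n → ℤ :=
        fun i => k i + (if i = ℓ then 1 else 0) - (if i = a then 1 else 0) with hk''
      have hk''S : inS m ℓ k'' := by
        constructor
        · rw [hk'']
          rw [Finset.sum_sub_distrib, Finset.sum_add_distrib,
              Finset.sum_ite_eq' Finset.univ ℓ (fun _ => (1 : ℤ)),
              Finset.sum_ite_eq' Finset.univ a (fun _ => (1 : ℤ))]
          simp [hk.1]
        · intro i hi
          by_contra hne
          have hpos : ¬ (k i < 0) := fun hlt => hne (hk.2 i hlt)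
          rw [hk''] at hi
          by_cases hia : i = a
          · subst hia; simp [hne] at hi; omega
          · simp [hne, hia] at hi; omega
      have hs1 : 1 ≤ ∑ i ∈ Finset.univ.erase ℓ, k i := by
        have h2 := Finset.single_le_sum (sum_erase_nonneg hk) ha
        omega
      have hsum'' : (∑ i ∈ Finset.univ.erase ℓ, k'' i) ≤ N := by
        have : (∑ i ∈ Finset.univ.erase ℓ, k'' i)
            = (∑ i ∈ Finset.univ.erase ℓ, k i) - 1 := by
          rw [hk'']
          rw [Finset.sum_sub_distrib, Finset.sum_add_distrib]
          have h1 : (∑ i ∈ Finset.univ.erase ℓ, if i = ℓ then (1:ℤ) else 0) = 0 := by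
            apply Finset.sum_eq_zero
            intro i hi
            simp [(Finset.mem_erase.mp hi).1]
          have h2 : (∑ i ∈ Finset.univ.erase ℓ, if i = a then (1:ℤ) else 0) = 1 := by
            rw [Finset.sum_ite_eq' (Finset.univ.erase ℓ) a (fun _ => (1 : ℤ))]
            simp [ha]
          rw [h1, h2]
          ring
        omega
      have hmem'' := ih k'' hk''S hsum''
      have hE := hp a ℓ _ hmem''
      rw [Eab_single] at hE
      simp only [Pi.zero_apply, add_zero] at hE
      have hshift : (fun i => k'' i + (if i = a then 1 else 0) - (if i = ℓ then 1 else 0)) = k := by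
        funext i
        rw [hk'']
        by_cases hia : i = a
        · subst hia; simp [haℓ]
        · by_cases hil : i = ℓ
          · subst hil; simp [hia]
          · simp [hia, hil]
      rw [hshift] at hE
      have hkl : k'' ℓ ≠ 0 := by
        have h1 := kl_eq hk
        have h2 : k'' ℓ = k ℓ + 1 := by rw [hk'']; simp [Ne.symm haℓ]
        rw [h2]
        omega
      have hc : ((k'' ℓ : ℂ)) ≠ 0 := Int.cast_ne_zero.mpr hkl
      have := Submodule.smul_mem p ((k'' ℓ : ℂ))⁻¹ hE
      rwa [smul_smul, inv_mul_cancel₀ hc, one_smul] at this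

end Aux


/-- For `m ≥ 1`, `V_n^0(−m,{ℓ})` is a simple `U(𝔤𝔩(n))`-module generated by
`x_ℓ^{−m}`: it is the cyclic module on `x_ℓ^{−m}`, and every nonzero
`𝔤𝔩(n)`-invariant subspace of it equals the whole module. -/
theorem stmt_12 (n : ℕ) (m : ℤ) (hm : 1 ≤ m) (ℓ : Fin n) :
    genMod (0 : Fin n → ℂ)
      (Finsupp.single (fun i => if i = ℓ then -m else 0) (1 : ℂ)) =
      Vmod (0 : Fin n → ℂ) (-m) {ℓ} ∧
    ∀ p : Submodule ℂ (Lmon n), glInv (0 : Fin n → ℂ) p →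
      p ≤ Vmod (0 : Fin n → ℂ) (-m) {ℓ} → p ≠ ⊥ →
      p = Vmod (0 : Fin n → ℂ) (-m) {ℓ} := by
  classical
  have hk0S : inS m ℓ (fun i => if i = ℓ then -m else 0) := by
    constructor
    · rw [Finset.sum_ite_eq' Finset.univ ℓ (fun _ => -m)]
      simp
    · intro i hi
      by_contra h
      simp [h] at hi
  have hgV : Finsupp.single (fun i => if i = ℓ then -m else 0) (1 : ℂ) ∈
      Vmod (0 : Fin n → ℂ) (-m) {ℓ} := single_mem_V hk0S
  have hsimple : ∀ p : Submodule ℂ (Lmon n), glInv (0 : Fin n → ℂ) p →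
      p ≤ Vmod (0 : Fin n → ℂ) (-m) {ℓ} → p ≠ ⊥ →
      p = Vmod (0 : Fin n → ℂ) (-m) {ℓ} := by
    intro p hp hpV hpne
    refine le_antisymm hpV ?_
    obtain ⟨f, hf, hf0⟩ : ∃ f ∈ p, f ≠ (0 : Lmon n) := by
      by_contra h
      push_neg at h
      exact hpne ((Submodule.eq_bot_iff p).mpr h)
    obtain ⟨k, hk⟩ := Finsupp.support_nonempty_iff.mpr hf0
    have h1 : Finsupp.single k (f k) ∈ p := isolate p hp f.support.card f hf le_rfl k hk
    have hfk : f k ≠ 0 := Finsupp.mem_support_iff.mp hk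
    have h2 : Finsupp.single k (1 : ℂ) ∈ p := by
      have := Submodule.smul_mem p (f k)⁻¹ h1
      rwa [Finsupp.smul_single, smul_eq_mul, inv_mul_cancel₀ hfk] at this
    have hkS : inS m ℓ k := supp_V (hpV hf) k hk
    have h0 : Finsupp.single (fun i => if i = ℓ then -m else 0) (1 : ℂ) ∈ p :=
      lower p hp (∑ i ∈ Finset.univ.erase ℓ, k i).toNat k hkS (Int.self_le_toNat _) h2
    rw [Vmod, Submodule.span_le]
    rintro g ⟨k', rfl, hs, hneg⟩
    exact raise hm p hp h0 (∑ i ∈ Finset.univ.erase ℓ, k' i).toNat k'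
      ⟨hs, fun i hi => Finset.mem_singleton.mp (hneg i rfl hi)⟩ (Int.self_le_toNat _)
  refine ⟨?_, hsimple⟩
  apply hsimple
  · intro a b f hf
    rw [genMod, Submodule.mem_sInf] at hf ⊢
    intro q hq
    exact hq.2 a b f (hf q hq)
  · exact sInf_le ⟨hgV, V_inv m ℓ⟩
  · intro hbot
    have hmem : Finsupp.single (fun i => if i = ℓ then -m else 0) (1 : ℂ) ∈
        genMod (0 : Fin n → ℂ) (Finsupp.single (fun i => if i = ℓ then -m else 0) (1 : ℂ)) :=
      Submodule.mem_sInf.mpr fun q hq => hq.1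
    rw [hbot, Submodule.mem_bot] at hmem
    exact one_ne_zero (Finsupp.single_eq_zero.mp hmem)
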